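/- arXiv:1208.1578 — 3 statements merged into one kernel-verified Lean document; each statement's English description precedes it below -/
import Mathlib

section
/- Let A be a positive definite Hermitian r×r matrix with eigenvalues exp(λ₁),…,exp(λ_r) and Φ = (φ^α_β) a complex matrix written in a unitary eigenbasis of A. For 0 < σ ≤ 1, Σ_{α,β} (exp(λ_α − λ_β) − 1)(exp(σλ_α) − exp(σλ_β))|φ^α_β|² ≥ Σ_{α,β} exp(−σλ_β)(exp(σλ_α) − exp(σλ_β))²|φ^α_β|². -/
open ComplexOrder

private lemma pointwise_est (a b σ : ℝ) (hσ0 : 0 < σ) (hσ1 : σ ≤ 1) :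
    Real.exp (-σ * b) * (Real.exp (σ * a) - Real.exp (σ * b)) ^ 2
      ≤ (Real.exp (a - b) - 1) * (Real.exp (σ * a) - Real.exp (σ * b)) := by
  have h1 : Real.exp (-σ * b) * (Real.exp (σ * a) - Real.exp (σ * b)) ^ 2
      = (Real.exp (σ * (a - b)) - 1) * (Real.exp (σ * a) - Real.exp (σ * b)) := by
    have : Real.exp (σ * (a - b)) = Real.exp (σ * a) * Real.exp (-σ * b) := by
      rw [← Real.exp_add]; ring_nf
    rw [this]
    have : (1 : ℝ) = Real.exp (σ * b) * Real.exp (-σ * b) := by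
      rw [← Real.exp_add]; ring_nf; rw [Real.exp_zero]
    rw [this]
    ring
  rw [h1]
  have key : 0 ≤ (Real.exp (a - b) - Real.exp (σ * (a - b))) *
      (Real.exp (σ * a) - Real.exp (σ * b)) := by
    rcases le_total a b with h | h
    · have h1 : Real.exp (a - b) ≤ Real.exp (σ * (a - b)) := by
        apply Real.exp_le_exp.mpr
        nlinarith
      have h2 : Real.exp (σ * a) ≤ Real.exp (σ * b) := by
        apply Real.exp_le_exp.mpr
        nlinarith
      nlinarith
    · have h1 : Real.exp (σ * (a - b)) ≤ Real.exp (a - b) := by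
        apply Real.exp_le_exp.mpr
        nlinarith
      have h2 : Real.exp (σ * b) ≤ Real.exp (σ * a) := by
        apply Real.exp_le_exp.mpr
        nlinarith
      nlinarith
  nlinarith

/-- The matrix `A` is the positive definite Hermitian endomorphism with eigenvalues
`exp (λ α)` written in a unitary eigenbasis, in which the matrix `Φ` has entries `Φ α β`.
For `0 < σ ≤ 1`, the sum `Σ (exp (λ α − λ β) − 1)(exp (σ λ α) − exp (σ λ β)) |Φ α β|²`
dominates `Σ exp (−σ λ β) (exp (σ λ α) − exp (σ λ β))² |Φ α β|²`. -/
theorem sum_exp_diff_estimate (r : ℕ) (lam : Fin r → ℝ)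
    (A Φ : Matrix (Fin r) (Fin r) ℂ) (hA : A.PosDef)
    (hAeig : A = Matrix.diagonal fun α => (Real.exp (lam α) : ℂ))
    (σ : ℝ) (hσ0 : 0 < σ) (hσ1 : σ ≤ 1) :
    ∑ α : Fin r, ∑ β : Fin r,
        Real.exp (-σ * lam β) * (Real.exp (σ * lam α) - Real.exp (σ * lam β)) ^ 2
          * ‖Φ α β‖ ^ 2
      ≤ ∑ α : Fin r, ∑ β : Fin r,
        (Real.exp (lam α - lam β) - 1)
          * (Real.exp (σ * lam α) - Real.exp (σ * lam β)) * ‖Φ α β‖ ^ 2 := by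
  apply Finset.sum_le_sum
  intro α _
  apply Finset.sum_le_sum
  intro β _
  apply mul_le_mul_of_nonneg_right _ (sq_nonneg _)
  exact pointwise_est (lam α) (lam β) σ hσ0 hσ1
end

section
/- Let V be a finite-dimensional complex inner product space and π ∈ End(V) with π² = π, π* = π. Let φ ∈ End(V) with (id − π)∘φ∘π = 0. Then ‖[φ*, π]‖² = tr([φ, φ*]∘π), where ‖·‖ is the Hilbert–Schmidt norm and [φ, φ*] = φφ* − φ*φ. -/
open Matrix

/-- For an orthogonal projection `p` (`p² = p`, `p* = p`) whose image is invariant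
under `φ` (i.e. `(1 − p) φ p = 0`), the Hilbert–Schmidt norm squared of `[φ*, p]`
equals `tr ([φ, φ*] p)`. -/
theorem hs_norm_commutator_adjoint_proj {n : ℕ} (p φ : Matrix (Fin n) (Fin n) ℂ)
    (hidem : p * p = p) (hsa : pᴴ = p) (hinv : (1 - p) * φ * p = 0) :
    Matrix.trace ((φᴴ * p - p * φᴴ)ᴴ * (φᴴ * p - p * φᴴ)) =
      Matrix.trace ((φ * φᴴ - φᴴ * φ) * p) := by
  have hq : p * (φ * p) = φ * p := by
    have h := hinv
    rw [sub_mul, sub_mul, one_mul, sub_eq_zero] at h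
    rw [← mul_assoc, ← h]
  simp only [conjTranspose_sub, conjTranspose_mul, hsa, conjTranspose_conjTranspose]
  simp only [sub_mul, mul_sub, trace_sub]
  have c : ∀ a b : Matrix (Fin n) (Fin n) ℂ, (a*b).trace = (b*a).trace := fun a b => trace_mul_comm a b
  have t1 : (p*φ*(φᴴ*p)).trace = (φ*φᴴ*p).trace := by
    rw [c, mul_assoc φᴴ p (p*φ), ← mul_assoc p p φ, hidem, c]
    exact (trace_mul_cycle φ φᴴ p).symm
  have t2 : (p*φ*(p*φᴴ)).trace = (φᴴ*φ*p).trace := by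
    rw [mul_assoc p φ (p*φᴴ), ← mul_assoc φ p φᴴ, ← mul_assoc p (φ*p) φᴴ, hq, c, ← mul_assoc]
  have t3 : (φ*p*(φᴴ*p)).trace = (φᴴ*φ*p).trace := by
    rw [c, mul_assoc φᴴ p (φ*p), hq, ← mul_assoc]
  have t4 : (φ*p*(p*φᴴ)).trace = (φᴴ*φ*p).trace := by
    rw [mul_assoc φ p (p*φᴴ), ← mul_assoc p p φᴴ, hidem, c]
    exact (trace_mul_cycle φᴴ φ p).symm
  rw [t1, t2, t3, t4]; ring
end

section
/- Let V be a finite-dimensional complex inner product space and φ, η ∈ End(V) with η self-adjoint. Then ⟨[φ, [φ*, η]], η⟩ + ⟨η, ([φ, [φ*, η]])*⟩ = 2·‖[φ, η]‖², where ⟨·,·⟩ is the Hilbert–Schmidt inner product and ‖·‖ the associated norm. -/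
open Matrix

/-- For `η` self-adjoint, `⟨[φ, [φ*, η]], η⟩ + ⟨η, ([φ, [φ*, η]])*⟩ = 2‖[φ, η]‖²` in
the Hilbert–Schmidt inner product `⟨A, B⟩ = tr (Aᴴ B)`. -/
theorem hs_inner_double_commutator {n : ℕ} (φ η : Matrix (Fin n) (Fin n) ℂ)
    (hη : ηᴴ = η) :
    Matrix.trace ((φ * (φᴴ * η - η * φᴴ) - (φᴴ * η - η * φᴴ) * φ)ᴴ * η) +
      Matrix.trace (ηᴴ * (φ * (φᴴ * η - η * φᴴ) - (φᴴ * η - η * φᴴ) * φ)ᴴ) =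
    2 * Matrix.trace ((φ * η - η * φ)ᴴ * (φ * η - η * φ)) := by
  simp only [conjTranspose_sub, conjTranspose_mul, conjTranspose_conjTranspose, hη,
    Matrix.sub_mul, Matrix.mul_sub, Matrix.trace_sub, Matrix.mul_assoc]
  linear_combination (norm := (simp only [Matrix.mul_assoc]; ring1))
    Matrix.trace_mul_comm η (φ * (φᴴ * η)) +
    Matrix.trace_mul_comm (η * η) (φ * φᴴ) +
    Matrix.trace_mul_comm φ (φᴴ * (η * η)) +
    (-1) * Matrix.trace_mul_comm η (φᴴ * (φ * η)) +
    (-1) * Matrix.trace_mul_comm (φ * η) (φᴴ * η) +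
    (-1) * Matrix.trace_mul_comm (η * φ) (η * φᴴ) - Matrix.trace_mul_comm (φᴴ * (η * η)) φ
end
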